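/- Let q ∈ SU(2) with scalar part q_r, and let λ ∈ ℝ with |λ| < 1. If there exists a differentiable function ψ : ℝ → ℂ² × ℂ² that is square-integrable on [0,∞), not identically zero on [0,∞), satisfies (D̸ψ)(z) = λ·ψ(z) for all z ≥ 0, and obeys the boundary condition ψ(0) = (u, qu) for some u ∈ ℂ², then λ = q_r. -/

import Mathlib

open MeasureTheory

/-- The Pauli matrices `σ₁, σ₂, σ₃`. -/
noncomputable def pauli1 : Matrix (Fin 2) (Fin 2) ℂ := !![0, 1; 1, 0]
noncomputable def pauli2 : Matrix (Fin 2) (Fin 2) ℂ := !![0, -Complex.I; Complex.I, 0]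
noncomputable def pauli3 : Matrix (Fin 2) (Fin 2) ℂ := !![1, 0; 0, -1]

/-- `q⃗·σ = q₁σ₁ + q₂σ₂ + q₃σ₃` for `q⃗ = (q₁,q₂,q₃) ∈ ℝ³`. -/
noncomputable def pauliVec (q1 q2 q3 : ℝ) : Matrix (Fin 2) (Fin 2) ℂ :=
  (q1 : ℂ) • pauli1 + (q2 : ℂ) • pauli2 + (q3 : ℂ) • pauli3

/-- The formal quaternionic half-line Dirac operator with mass `1`:
`(D̸(φ, χ))(z) = (−i·φ′(z) + χ(z), φ(z) + i·χ′(z))`. -/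
noncomputable def diracQ (ψ : ℝ → (Fin 2 → ℂ) × (Fin 2 → ℂ)) (z : ℝ) :
    (Fin 2 → ℂ) × (Fin 2 → ℂ) :=
  ((-Complex.I) • deriv (fun t => (ψ t).1) z + (ψ z).2,
   (ψ z).1 + Complex.I • deriv (fun t => (ψ t).2) z)

/-!
With `κ = √(1 - λ²) > 0` and `c = λ - iκ`, the eigenvalue equation is a linear ODE for
`ψ = (φ, χ)` in which `χ - cφ` grows like `e^{κz}`. Square integrability kills this mode, so
`χ = cφ` on `[0, ∞)`, and then `ψ` decays like `e^{-κz}`; in particular `ψ(0) ≠ 0`. The boundary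
condition now reads `qu = cu` with `u ≠ 0`. Since `(q - q_r)² = -|q⃗|²` is real, so is
`(c - q_r)²`, whose imaginary part is `-2κ(λ - q_r)`.
-/

open Complex Set

theorem eq_zero_of_norm_le_mul_of_integrableOn_Ici {F G : Type*} [Norm F]
    [NormedAddCommGroup G] {ψ : ℝ → F} {a C : ℝ} {v : G}
    (hψ : IntegrableOn (fun z => ‖ψ z‖ ^ 2) (Ici a)) (hv : ∀ z, a ≤ z → ‖v‖ ≤ C * ‖ψ z‖) :
    v = 0 := by
  have hconst : IntegrableOn (fun _ => ‖v‖ ^ 2) (Ici a) := by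
    refine (hψ.const_mul (C ^ 2)).mono' aestronglyMeasurable_const ?_
    refine (ae_restrict_iff' measurableSet_Ici).mpr (ae_of_all _ fun z hz => ?_)
    rw [Real.norm_of_nonneg (by positivity), ← mul_pow]
    exact pow_le_pow_left₀ (norm_nonneg v) (hv z hz) 2
  rw [integrableOn_const_iff, Real.volume_Ici] at hconst
  simpa using hconst

section

variable {E : Type*} [NormedAddCommGroup E] [NormedSpace ℂ E]

theorem eq_exp_mul_smul_of_hasDerivAt {g : ℝ → E} {k : ℂ}
    (hg : ∀ z, 0 ≤ z → HasDerivAt g (k • g z) z) {z : ℝ} (hz : 0 ≤ z) :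
    g z = exp (k * z) • g 0 := by
  set h : ℝ → E := fun t => exp (-k * t) • g t
  have hexp (t : ℝ) : HasDerivAt (fun t : ℝ => exp (-k * t)) (exp (-k * t) * -k) t := by
    simpa using ((hasDerivAt_id (t : ℂ)).const_mul (-k)).cexp.comp_ofReal
  have hh : ∀ t ∈ Ico 0 z, HasDerivWithinAt h 0 (Ici t) t := fun t ht => by
    have hd := ((hexp t).smul (hg t ht.1)).hasDerivWithinAt (s := Ici t)
    rwa [smul_smul, ← add_smul, mul_neg, add_neg_cancel, zero_smul] at hd
  have hcont : ContinuousOn h (Icc 0 z) := fun t ht =>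
    ((hexp t).continuousAt.smul (hg t ht.1).continuousAt).continuousWithinAt
  have := constant_of_has_deriv_right_zero hcont hh z ⟨hz, le_rfl⟩
  simp only [h, ofReal_zero, mul_zero, exp_zero, one_smul] at this
  rw [← this, smul_smul, ← exp_add]
  simp

/-- The eigenvalue equation `D̸ψ = λψ` solved for `ψ'`. -/
def diracEigenField (lam : ℝ) (v : E × E) : E × E :=
  (I • ((lam : ℂ) • v.1 - v.2), I • (v.1 - (lam : ℂ) • v.2))

variable {lam κ : ℝ}

theorem diracEigenField_growingMode (hκ : κ ^ 2 = 1 - lam ^ 2) (v : E × E) :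
    (diracEigenField lam v).2 - ((lam : ℂ) - I * κ) • (diracEigenField lam v).1 =
      (κ : ℂ) • (v.2 - ((lam : ℂ) - I * κ) • v.1) := by
  have hκ' : (κ : ℂ) ^ 2 = 1 - (lam : ℂ) ^ 2 := by exact_mod_cast hκ
  simp only [diracEigenField]
  linear_combination (norm := module)
    hκ' • (-I • v.1) + I_sq • ((κ * lam : ℂ) • v.1 - (κ : ℂ) • v.2)

theorem diracEigenField_of_snd_eq (hκ : κ ^ 2 = 1 - lam ^ 2) {v : E × E}
    (hv : v.2 = ((lam : ℂ) - I * κ) • v.1) : diracEigenField lam v = (-κ : ℂ) • v := by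
  have hκ' : (κ : ℂ) ^ 2 = 1 - (lam : ℂ) ^ 2 := by exact_mod_cast hκ
  ext1
  · simp only [diracEigenField, Prod.smul_fst]
    linear_combination (norm := module) (-I) • hv + I_sq • ((κ : ℂ) • v.1)
  · simp only [diracEigenField, Prod.smul_snd]
    linear_combination (norm := module)
      (κ - I * lam : ℂ) • hv + hκ' • (-I • v.1) + I_sq • ((κ * lam : ℂ) • v.1)

theorem snd_eq_smul_fst_of_integrableOn {ψ : ℝ → E × E} (hκ : κ ^ 2 = 1 - lam ^ 2) (hκ0 : 0 ≤ κ)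
    (hψ : ∀ z, 0 ≤ z → HasDerivAt ψ (diracEigenField lam (ψ z)) z)
    (hL2 : IntegrableOn (fun z => ‖ψ z‖ ^ 2) (Ici 0)) {z : ℝ} (hz : 0 ≤ z) :
    (ψ z).2 = ((lam : ℂ) - I * κ) • (ψ z).1 := by
  set c : ℂ := lam - I * κ
  set P : ℝ → E := fun t => (ψ t).2 - c • (ψ t).1
  have hP : ∀ t, 0 ≤ t → HasDerivAt P ((κ : ℂ) • P t) t := fun t ht => by
    have hd := (hψ t ht).hasFDerivAt.snd.hasDerivAt.sub
      ((hψ t ht).hasFDerivAt.fst.hasDerivAt.const_smul c)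
    convert hd using 1
    · rfl
    · simpa using (diracEigenField_growingMode hκ (ψ t)).symm
  have hP0 : P 0 = 0 := by
    refine eq_zero_of_norm_le_mul_of_integrableOn_Ici hL2 (C := 1 + ‖c‖) fun t ht => ?_
    calc ‖P 0‖ ≤ ‖exp (κ * t)‖ * ‖P 0‖ := by
          refine le_mul_of_one_le_left (norm_nonneg _) ?_
          rw [← ofReal_mul, norm_exp_ofReal]
          exact Real.one_le_exp (mul_nonneg hκ0 ht)
      _ = ‖P t‖ := by rw [eq_exp_mul_smul_of_hasDerivAt hP ht, norm_smul]
      _ ≤ ‖(ψ t).2‖ + ‖c‖ * ‖(ψ t).1‖ := (norm_sub_le _ _).trans_eq (by rw [norm_smul])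
      _ ≤ (1 + ‖c‖) * ‖ψ t‖ := by
          nlinarith [norm_snd_le (ψ t), norm_fst_le (ψ t), norm_nonneg c]
  have := eq_exp_mul_smul_of_hasDerivAt hP hz
  rwa [hP0, smul_zero, sub_eq_zero] at this

end

theorem pauliVec_mul_self (q1 q2 q3 : ℝ) :
    pauliVec q1 q2 q3 * pauliVec q1 q2 q3 = ((q1 ^ 2 + q2 ^ 2 + q3 ^ 2 : ℝ) : ℂ) • 1 := by
  ext i j
  fin_cases i <;> fin_cases j <;>
    simp [pauliVec, pauli1, pauli2, pauli3, Matrix.mul_apply, Fin.sum_univ_two] <;>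
    ring_nf <;> simp [I_sq]

theorem hasDerivAt_of_diracQ_eq_smul {ψ : ℝ → (Fin 2 → ℂ) × (Fin 2 → ℂ)} {lam z : ℝ}
    (hψ : DifferentiableAt ℝ ψ z) (h : diracQ ψ z = (lam : ℂ) • ψ z) :
    HasDerivAt ψ (diracEigenField lam (ψ z)) z := by
  have h1 := congrArg Prod.fst h
  have h2 := congrArg Prod.snd h
  simp only [diracQ, Prod.smul_fst, Prod.smul_snd] at h1 h2
  convert hψ.fst.hasDerivAt.prodMk hψ.snd.hasDerivAt using 1
  ext1 <;> simp only [diracEigenField]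
  · linear_combination (norm := module) (-I) • h1 - I_sq • deriv (fun t => (ψ t).1) z
  · linear_combination (norm := module) I • h2 - I_sq • deriv (fun t => (ψ t).2) z

theorem sq_sub_eq_of_mulVec_eq_smul {q : Matrix (Fin 2) (Fin 2) ℂ} {qr q1 q2 q3 : ℝ}
    (hq : q = (qr : ℂ) • (1 : Matrix (Fin 2) (Fin 2) ℂ) + I • pauliVec q1 q2 q3)
    {u : Fin 2 → ℂ} (hu : u ≠ 0) {c : ℂ} (hqu : q.mulVec u = c • u) :
    (c - qr) ^ 2 = -((q1 ^ 2 + q2 ^ 2 + q3 ^ 2 : ℝ) : ℂ) := by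
  have hσ : (pauliVec q1 q2 q3).mulVec u = (-I * (c - qr)) • u := by
    rw [hq, Matrix.add_mulVec, Matrix.smul_mulVec, Matrix.smul_mulVec, Matrix.one_mulVec] at hqu
    linear_combination (norm := module) (-I) • hqu + I_sq • (pauliVec q1 q2 q3).mulVec u
  have hσσ := Matrix.mulVec_mulVec u (pauliVec q1 q2 q3) (pauliVec q1 q2 q3)
  rw [pauliVec_mul_self, Matrix.smul_mulVec, Matrix.one_mulVec, hσ, Matrix.mulVec_smul, hσ,
    smul_smul, ← sub_eq_zero, ← sub_smul] at hσσ
  linear_combination -(smul_eq_zero.mp hσσ).resolve_right hu + (c - qr) ^ 2 * I_sq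

theorem quaternionicDirac_eigenvalue_eq_scalar_part_general
    (q : Matrix (Fin 2) (Fin 2) ℂ) (qr q1 q2 q3 : ℝ)
    (hq : q = (qr : ℂ) • (1 : Matrix (Fin 2) (Fin 2) ℂ) + Complex.I • pauliVec q1 q2 q3)
    (lam : ℝ) (hlam : |lam| < 1)
    (ψ : ℝ → (Fin 2 → ℂ) × (Fin 2 → ℂ)) (hdiff : Differentiable ℝ ψ)
    (hL2 : IntegrableOn (fun z => ‖ψ z‖ ^ 2) (Set.Ici (0 : ℝ)))
    (hne : ∃ z : ℝ, 0 ≤ z ∧ ψ z ≠ 0)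
    (heig : ∀ z : ℝ, 0 ≤ z → diracQ ψ z = (lam : ℂ) • ψ z)
    (hbc : ∃ u : Fin 2 → ℂ, ψ 0 = (u, q.mulVec u)) :
    lam = qr := by
  obtain ⟨u, hbc⟩ := hbc
  obtain ⟨z, hz, hψz⟩ := hne
  have hlam2 : 0 < 1 - lam ^ 2 := sub_pos.mpr ((sq_lt_one_iff_abs_lt_one lam).mpr hlam)
  set κ := √(1 - lam ^ 2)
  have hκ : κ ^ 2 = 1 - lam ^ 2 := Real.sq_sqrt hlam2.le
  have hκ0 : 0 < κ := Real.sqrt_pos.mpr hlam2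
  have hψ' (t : ℝ) (ht : 0 ≤ t) : HasDerivAt ψ (diracEigenField lam (ψ t)) t :=
    hasDerivAt_of_diracQ_eq_smul (hdiff t) (heig t ht)
  have hmode {t : ℝ} (ht : 0 ≤ t) := snd_eq_smul_fst_of_integrableOn hκ hκ0.le hψ' hL2 ht
  have hdecay : ψ z = exp (-κ * z) • ψ 0 := by
    refine eq_exp_mul_smul_of_hasDerivAt (fun t ht => ?_) hz
    simpa [diracEigenField_of_snd_eq hκ (hmode ht)] using hψ' t ht
  have hu : u ≠ 0 := by
    rintro rfl
    simp [hdecay, hbc] at hψz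
  have hc := sq_sub_eq_of_mulVec_eq_smul hq hu (by simpa [hbc] using hmode le_rfl)
  have him : (lam - qr) * κ = 0 := by
    have := congrArg Complex.im hc
    simp only [sq, mul_im, mul_re, sub_re, sub_im, neg_im, ofReal_re, ofReal_im, I_re, I_im] at this
    linear_combination -this / 2
  exact sub_eq_zero.mp ((mul_eq_zero.mp him).resolve_right hκ0.ne')

/-- If `q = q_r·1₂ + i(q⃗·σ) ∈ SU(2)`, `λ ∈ (−1,1)`, and there is a differentiable,
square-integrable, not identically zero solution `ψ` of `D̸ψ = λ·ψ` on `[0,∞)` obeying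
the boundary condition `ψ(0) = (u, qu)`, then `λ = q_r`: the only possible eigenvalue
of `D̸(q)` in the essential spectral gap is the scalar part of `q`. -/
theorem quaternionicDirac_eigenvalue_eq_scalar_part
    (q : Matrix (Fin 2) (Fin 2) ℂ) (qr q1 q2 q3 : ℝ)
    (hq : q = (qr : ℂ) • (1 : Matrix (Fin 2) (Fin 2) ℂ) + Complex.I • pauliVec q1 q2 q3)
    (hnorm : qr ^ 2 + (q1 ^ 2 + q2 ^ 2 + q3 ^ 2) = 1)
    (lam : ℝ) (hlam : |lam| < 1)
    (ψ : ℝ → (Fin 2 → ℂ) × (Fin 2 → ℂ)) (hdiff : Differentiable ℝ ψ)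
    (hL2 : IntegrableOn (fun z => ‖ψ z‖ ^ 2) (Set.Ici (0 : ℝ)))
    (hne : ∃ z : ℝ, 0 ≤ z ∧ ψ z ≠ 0)
    (heig : ∀ z : ℝ, 0 ≤ z → diracQ ψ z = (lam : ℂ) • ψ z)
    (hbc : ∃ u : Fin 2 → ℂ, ψ 0 = (u, q.mulVec u)) :
    lam = qr :=
  quaternionicDirac_eigenvalue_eq_scalar_part_general q qr q1 q2 q3 hq lam hlam ψ hdiff hL2 hne heig
    hbc
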